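/- Let β̂ = β̂(y, X, Σ) be an LS estimator, i.e. both linearly equivariant (A^{-1} β̂(y, X, Σ) = β̂(y, X A, A Σ A^T) for all invertible d×d matrices A) and scale invariant (β̂(y, X, Σ) = β̂(t y, t X, t² Σ) for all nonzero real t). Then R_V(β̂) = R_{V_u}(β̂), where V_u is the covariance matrix of the model with Σ = I, σ² = 1, and β = η u, for any fixed unit vector u ∈ R^d and η² = β^T Σ β / σ² the signal-to-noise ratio. In particular, R_V(β̂) depends on (β, Σ, σ²) only through the signal-to-noise ratio η² (together with d and n). -/

import Mathlib

/-!
Write `M = Σ^{1/2}`, so that the design is `X = Z M` with `Z` a matrix of iid standard normal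
entries. Linear equivariance under `A = M` gives `β̂(y, Z M, Σ) = M⁻¹ β̂(y, Z, I)`, and the loss
`(β̂ - β)ᵀ Σ (β̂ - β)` becomes `‖β̂(y, Z, I) - M β‖²`: the risk is that of the model with `Σ = I`
and coefficient `M β`. Scale invariance together with equivariance under `A = t⁻¹ I` gives
`β̂(t y, X, T) = t β̂(y, X, T)`, which rescales the noise to `σ² = 1` and the coefficient to
`M β / σ`, a vector of squared length `η²`. Finally, for an orthogonal `Q` the law of `Z` is
invariant under `Z ↦ Z Qᵀ`, and equivariance under `Qᵀ` then shows that the risk at coefficient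
`Q w` equals the risk at `w`; since a reflection maps any vector of squared length `η²` to any
other one, the risk depends on `η²` only.
-/

open MeasureTheory ProbabilityTheory Matrix Filter
open scoped ENNReal NNReal Topology

noncomputable section
open scoped Classical

namespace Dicker

/-- Sample space: raw iid standard normal design entries and the error vector. -/
abbrev Omega (n d : ℕ) : Type := (Fin n → Fin d → ℝ) × (Fin n → ℝ)

/-- Law of the raw matrix of iid standard normal entries. -/
def PX (n d : ℕ) : Measure (Fin n → Fin d → ℝ) :=
  Measure.pi fun _ => Measure.pi fun _ => gaussianReal 0 1

/-- Base probability measure of the Gaussian linear model with noise variance `σ2`. -/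
def P (n d : ℕ) (σ2 : ℝ≥0) : Measure (Omega n d) :=
  (PX n d).prod (Measure.pi fun _ : Fin n => gaussianReal 0 σ2)

/-- Square root of a positive semidefinite matrix (junk value `0` otherwise). -/
def msqrt {d : ℕ} (S : Matrix (Fin d) (Fin d) ℝ) : Matrix (Fin d) (Fin d) ℝ :=
  if h : S.PosSemidef then
    (h.1.eigenvectorUnitary : Matrix (Fin d) (Fin d) ℝ) *
      diagonal ((↑) ∘ (Real.sqrt ·) ∘ h.1.eigenvalues) *
      (star h.1.eigenvectorUnitary : Matrix (Fin d) (Fin d) ℝ)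
  else 0

lemma msqrt_props {d : ℕ} (S : Matrix (Fin d) (Fin d) ℝ) (h : S.PosSemidef) :
    msqrt S * msqrt S = S ∧ (msqrt S)ᵀ = msqrt S := by
  rw [msqrt, dif_pos h]
  set U : Matrix (Fin d) (Fin d) ℝ := (h.1.eigenvectorUnitary : Matrix (Fin d) (Fin d) ℝ)
  have hU : star U * U = 1 := Unitary.coe_star_mul_self h.1.eigenvectorUnitary
  have hsp := h.1.spectral_theorem
  rw [Unitary.conjStarAlgAut_apply] at hsp
  constructor
  · simp only [Matrix.mul_assoc]
    rw [← Matrix.mul_assoc (star U) U, hU, Matrix.one_mul, ← Matrix.mul_assoc (diagonal _),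
      diagonal_mul_diagonal]
    conv_rhs => rw [hsp]
    simp only [Matrix.mul_assoc]
    congr 3
    funext i
    simp [Real.mul_self_sqrt (h.eigenvalues_nonneg i)]
  · rw [transpose_mul, transpose_mul, diagonal_transpose, Matrix.star_eq_conjTranspose,
      conjTranspose_eq_transpose_of_trivial, transpose_transpose, Matrix.mul_assoc]

/-- The design matrix `X`, whose rows are iid `N(0, S)`. -/
def dMat {n d : ℕ} (S : Matrix (Fin d) (Fin d) ℝ) (ω : Omega n d) :
    Matrix (Fin n) (Fin d) ℝ :=
  Matrix.of ω.1 * msqrt S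

/-- The response vector `y = X β + ε`. -/
def resp {n d : ℕ} (S : Matrix (Fin d) (Fin d) ℝ) (β : Fin d → ℝ) (ω : Omega n d) :
    Fin n → ℝ :=
  dMat S ω *ᵥ β + ω.2

/-- An estimator of the coefficient vector, a function of the data `(y, X)`. -/
abbrev Estimator (n d : ℕ) : Type :=
  (Fin n → ℝ) → Matrix (Fin n) (Fin d) ℝ → (Fin d → ℝ)

/-- The predictive risk `R_V(est) = σ⁻² E[(est − β)ᵀ Σ (est − β)]`. -/
def risk {d : ℕ} (n : ℕ) (S : Matrix (Fin d) (Fin d) ℝ) (β : Fin d → ℝ) (σ2 : ℝ≥0)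
    (est : Estimator n d) : ℝ≥0∞ :=
  (σ2 : ℝ≥0∞)⁻¹ *
    ∫⁻ ω, ENNReal.ofReal
      ((est (resp S β ω) (dMat S ω) - β) ⬝ᵥ (S *ᵥ (est (resp S β ω) (dMat S ω) - β)))
      ∂(P n d σ2)

/-- The signal-to-noise ratio `η² = βᵀ Σ β / σ²`. -/
def snr {d : ℕ} (S : Matrix (Fin d) (Fin d) ℝ) (β : Fin d → ℝ) (σ2 : ℝ≥0) : ℝ :=
  (β ⬝ᵥ S *ᵥ β) / σ2

/-- The Moore–Penrose pseudoinverse of a square real matrix, characterized by the four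
Penrose conditions (which determine it uniquely; it always exists). -/
def pinv {k : ℕ} (A : Matrix (Fin k) (Fin k) ℝ) : Matrix (Fin k) (Fin k) ℝ :=
  if h : ∃ B, A * B * A = A ∧ B * A * B = B ∧ (A * B)ᵀ = A * B ∧ (B * A)ᵀ = B * A
  then h.choose else 0

/-- The OLS estimator `(XᵀX)⁻ Xᵀ y` (Moore–Penrose pseudoinverse version). -/
def ols {n d : ℕ} : Estimator n d := fun y X => (pinv (Xᵀ * X) * Xᵀ) *ᵥ y

/-- The OLS estimator `(XᵀX)⁻¹ Xᵀ y` (matrix-inverse version). -/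
def olsI {n d : ℕ} : Estimator n d := fun y X => ((Xᵀ * X)⁻¹ * Xᵀ) *ᵥ y

/-- The trivial estimator `β̂ = 0`. -/
def nullEst {n d : ℕ} : Estimator n d := fun _ _ => 0

/-- The James–Stein estimator with shrinkage parameter `λ ∈ [0,∞]`; `β̂_js(∞) = 0`. -/
def jsE {n d : ℕ} (lam : ℝ≥0∞) : Estimator n d :=
  fun y X => if lam = ∞ then 0 else (1 + lam.toReal)⁻¹ • ols y X

/-- The oracle James–Stein shrinkage parameter `λ_js*`. -/
def lamJSStar (n d : ℕ) (e : ℝ) : ℝ≥0∞ :=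
  if d + 1 < n then (d : ℝ≥0∞) / (ENNReal.ofReal e * ((n : ℝ≥0∞) - d - 1))
  else if n + 1 < d then (d : ℝ≥0∞) / (ENNReal.ofReal e * ((d : ℝ≥0∞) - n - 1))
  else ∞

/-- The ridge estimator `(XᵀX + nλΣ)⁻ Xᵀ y` (pseudoinverse version). -/
def ridgeP {n d : ℕ} (S : Matrix (Fin d) (Fin d) ℝ) (lam : ℝ) : Estimator n d :=
  fun y X => (pinv (Xᵀ * X + ((n : ℝ) * lam) • S) * Xᵀ) *ᵥ y

/-- Pseudoinverse ridge estimator with parameter `λ ∈ [0,∞]`; equal to `0` at `λ = ∞`. -/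
def ridgePE {n d : ℕ} (S : Matrix (Fin d) (Fin d) ℝ) (lam : ℝ≥0∞) : Estimator n d :=
  fun y X => if lam = ∞ then 0 else ridgeP S lam.toReal y X

/-- The ridge estimator `(XᵀX + nλΣ)⁻¹ Xᵀ y` (matrix-inverse version). -/
def ridgeI {n d : ℕ} (S : Matrix (Fin d) (Fin d) ℝ) (lam : ℝ) : Estimator n d :=
  fun y X => ((Xᵀ * X + ((n : ℝ) * lam) • S)⁻¹ * Xᵀ) *ᵥ y

/-- Matrix-inverse ridge estimator with parameter `λ ∈ [0,∞]`; equal to `0` at `λ = ∞`. -/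
def ridgeIE {n d : ℕ} (S : Matrix (Fin d) (Fin d) ℝ) (lam : ℝ≥0∞) : Estimator n d :=
  fun y X => if lam = ∞ then 0 else ridgeI S lam.toReal y X

/-- The marginal regression estimator `n⁻¹ Σ⁻¹ Xᵀ y`. -/
def marg {n d : ℕ} (S : Matrix (Fin d) (Fin d) ℝ) : Estimator n d :=
  fun y X => (n : ℝ)⁻¹ • ((S⁻¹ * Xᵀ) *ᵥ y)

/-- Squared Euclidean norm of a vector. -/
def sqnorm {m : ℕ} (v : Fin m → ℝ) : ℝ := ∑ i, (v i) ^ 2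

/-- The usual estimator `σ̂² = (n−d)⁻¹ ‖y − X β̂_ols‖²` of the noise variance. -/
def hatSigma2 {n d : ℕ} (y : Fin n → ℝ) (X : Matrix (Fin n) (Fin d) ℝ) : ℝ :=
  ((n : ℝ) - d)⁻¹ * sqnorm (y - X *ᵥ olsI y X)

/-- The estimator `η̂² = max{‖y‖²/(n σ̂²) − 1, 0}` of the signal-to-noise ratio. -/
def hatEta2 {n d : ℕ} (y : Fin n → ℝ) (X : Matrix (Fin n) (Fin d) ℝ) : ℝ :=
  max (sqnorm y / ((n : ℝ) * hatSigma2 y X) - 1) 0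

/-- The adaptive ridge estimator `β̌_r`, with `λ̂_r* = d/(n η̂²)` (equal to `0` when `η̂² = 0`). -/
def adaRidge {n d : ℕ} (S : Matrix (Fin d) (Fin d) ℝ) : Estimator n d :=
  fun y X => if hatEta2 y X = 0 then 0
    else ridgeI S ((d : ℝ) / ((n : ℝ) * hatEta2 y X)) y X

/-- The adaptive James–Stein estimator `β̌_js`, with `λ̂_js* = d/(η̂²(n−d−1))`
(equal to `0` when `η̂² = 0`). -/
def adaJS {n d : ℕ} : Estimator n d :=
  fun y X => if hatEta2 y X = 0 then 0
    else (1 + (d : ℝ) / (hatEta2 y X * ((n : ℝ) - d - 1)))⁻¹ • olsI y X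

/-- Stieltjes transform of the Marčenko–Pastur distribution. -/
def mMP (ρ s : ℝ) : ℝ :=
  -(1 / (2 * ρ * s)) * (s + ρ - 1 + Real.sqrt ((s + ρ - 1) ^ 2 - 4 * ρ * s))

/-- Closed form of the asymptotic predictive risk of the oracle ridge estimator. -/
def Rr (ρ e : ℝ) : ℝ :=
  (1 / (2 * ρ)) * (e * (ρ - 1) - ρ + Real.sqrt ((e * (ρ - 1) - ρ) ^ 2 + 4 * ρ ^ 2 * e))

/-- The `ℓ²→ℓ²` operator norm of a square real matrix. -/
def opNorm {k : ℕ} (A : Matrix (Fin k) (Fin k) ℝ) : ℝ :=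
  ‖Matrix.toEuclideanCLM (𝕜 := ℝ) A‖

/-- Smallest eigenvalue of a Hermitian real matrix (junk value `0` otherwise). -/
def smallestEig {k : ℕ} (S : Matrix (Fin k) (Fin k) ℝ) : ℝ :=
  if h : S.IsHermitian then ⨅ i, h.eigenvalues i else 0


/-- The oracle ridge shrinkage parameter `λ_r* = d/(n η²)` (in `[0,∞]`). -/
def lamRStar (n d : ℕ) (e : ℝ) : ℝ≥0∞ :=
  (d : ℝ≥0∞) / ((n : ℝ≥0∞) * ENNReal.ofReal e)

/-- Asymptotic predictive risk of a James–Stein estimator with parameter `λ`. -/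
def RjsLim (lam ρ e : ℝ) : ℝ := (lam ^ 2 * e + ρ / (1 - ρ)) / (1 + lam) ^ 2

/-- Limiting optimal James–Stein shrinkage parameter `λ_js = ρ/(η²(1−ρ))`. -/
def lamJSlim (ρ e : ℝ) : ℝ := ρ / (e * (1 - ρ))

/-- Limiting Baranchik shrinkage parameter `λ_bar`. -/
def lamBar (c ρ e : ℝ) : ℝ := c * (1 - ρ) / (e + ρ - c * (1 - ρ))

/-- Baranchik's estimator. -/
def baranchik {n d : ℕ} (c : ℝ) : Estimator n d :=
  fun y X => (1 - c * sqnorm (y - X *ᵥ olsI y X) / sqnorm (X *ᵥ olsI y X)) • olsI y X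

/-- The James–Stein estimator with a real shrinkage parameter (matrix-inverse OLS). -/
def jsR {n d : ℕ} (lam : ℝ) : Estimator n d := fun y X => (1 + lam)⁻¹ • olsI y X

/-- The marginal shrinkage estimator `(1/((1+λ)n)) Σ⁻¹ Xᵀ y`. -/
def margShrink {n d : ℕ} (S : Matrix (Fin d) (Fin d) ℝ) (lam : ℝ) : Estimator n d :=
  fun y X => (1 + lam)⁻¹ • marg S y X

/-- The marginal shrinkage estimator with parameter `λ ∈ [0,∞]`; equal to `0` at `λ = ∞`. -/
def margShrinkE {n d : ℕ} (S : Matrix (Fin d) (Fin d) ℝ) (lam : ℝ≥0∞) : Estimator n d :=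
  fun y X => if lam = ∞ then 0 else margShrink S lam.toReal y X

/-- The adaptive marginal shrinkage estimator with `λ̂_m* = d/(n η̂²) + (d+1)/n`
(equal to `0` when `η̂² = 0`). -/
def adaMargShrink {n d : ℕ} (S : Matrix (Fin d) (Fin d) ℝ) : Estimator n d :=
  fun y X => if hatEta2 y X = 0 then 0
    else margShrink S ((d : ℝ) / ((n : ℝ) * hatEta2 y X) + ((d : ℝ) + 1) / n) y X

end Dicker

open scoped MatrixOrder

section

variable {ι : Type*} [Fintype ι] [DecidableEq ι]

lemma dotProduct_mulVec_mulVec_of_mem_orthogonalGroup {Q : Matrix ι ι ℝ}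
    (hQ : Q ∈ orthogonalGroup ι ℝ) (v w : ι → ℝ) : (Q *ᵥ v) ⬝ᵥ (Q *ᵥ w) = v ⬝ᵥ w := by
  rw [← vecMul_transpose, ← dotProduct_mulVec, mulVec_mulVec,
    (mem_orthogonalGroup_iff' ι ℝ).mp hQ, one_mulVec]

lemma exists_mem_orthogonalGroup_mulVec_eq {v w : ι → ℝ} (h : v ⬝ᵥ v = w ⬝ᵥ w) :
    ∃ Q ∈ orthogonalGroup ι ℝ, Q *ᵥ w = v := by
  let b := (EuclideanSpace.basisFun ι ℝ).toBasis
  let f := Submodule.reflection (ℝ ∙ (WithLp.toLp 2 w - WithLp.toLp 2 v))ᗮ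
  refine ⟨LinearMap.toMatrix b b f.toLinearEquiv, f.toMatrix_mem_unitaryGroup _ _, ?_⟩
  have hn : ‖WithLp.toLp 2 w‖ = ‖WithLp.toLp 2 v‖ := by
    simp only [EuclideanSpace.norm_eq, Real.norm_eq_abs, sq_abs]
    simpa [dotProduct, sq] using congrArg Real.sqrt h.symm
  have key := LinearMap.toMatrix_mulVec_repr b b f.toLinearEquiv.toLinearMap (WithLp.toLp 2 w)
  rwa [LinearEquiv.coe_coe, LinearIsometryEquiv.coe_toLinearEquiv,
    Submodule.reflection_sub hn] at key

lemma measurePreserving_mulVec_pi_gaussianReal {Q : Matrix ι ι ℝ}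
    (hQ : Q ∈ orthogonalGroup ι ℝ) :
    MeasurePreserving (Q *ᵥ ·) (Measure.pi fun _ : ι => gaussianReal 0 1)
      (Measure.pi fun _ : ι => gaussianReal 0 1) := by
  let f : EuclideanSpace ℝ ι ≃ₗᵢ[ℝ] EuclideanSpace ℝ ι :=
    (LinearMap.isometryOfInner (toEuclideanLin Q) fun x y => by
      simp [EuclideanSpace.inner_eq_star_dotProduct,
        dotProduct_mulVec_mulVec_of_mem_orthogonalGroup hQ]).toLinearIsometryEquiv rfl
  have hpi : (Measure.pi fun _ : ι => gaussianReal 0 1) =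
      (stdGaussian (EuclideanSpace ℝ ι)).map WithLp.ofLp := by
    rw [← map_pi_eq_stdGaussian, Measure.map_map (by fun_prop) (by fun_prop)]
    simp [Function.comp_def]
  have hcomp : (Q *ᵥ ·) ∘ WithLp.ofLp = WithLp.ofLp ∘ f := rfl
  refine ⟨by fun_prop, ?_⟩
  rw [hpi, Measure.map_map (by fun_prop) (by fun_prop), hcomp,
    ← Measure.map_map (by fun_prop) (by fun_prop), stdGaussian_map]

lemma inv_mulVec_dotProduct_mul_self_mulVec {M : Matrix ι ι ℝ} (hM : IsUnit M.det)
    (hMT : Mᵀ = M) (x : ι → ℝ) : (M⁻¹ *ᵥ x) ⬝ᵥ ((M * M) *ᵥ (M⁻¹ *ᵥ x)) = x ⬝ᵥ x := by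
  rw [← mulVec_mulVec, mulVec_mulVec x M, mul_nonsing_inv M hM, one_mulVec, dotProduct_mulVec,
    ← mulVec_transpose, mulVec_mulVec, hMT, mul_nonsing_inv M hM, one_mulVec]

end

namespace Dicker

section SquareRoot

variable {d : ℕ} {S : Matrix (Fin d) (Fin d) ℝ}

lemma msqrt_eq_sqrt (hS : S.PosSemidef) : msqrt S = CFC.sqrt S := by
  rw [CFC.sqrt_eq_cfc, cfc_nnreal_eq_real _ S, hS.1.cfc_eq, msqrt, dif_pos hS,
    IsHermitian.cfc, Unitary.conjStarAlgAut_apply]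
  congr 3
  ext i
  simp [hS.eigenvalues_nonneg i]

lemma msqrt_one : msqrt (1 : Matrix (Fin d) (Fin d) ℝ) = 1 := by
  rw [msqrt_eq_sqrt PosSemidef.one, CFC.sqrt_one]

lemma msqrt_mul_self (hS : S.PosSemidef) : msqrt S * msqrt S = S := by
  rw [msqrt_eq_sqrt hS, CFC.sqrt_mul_sqrt_self S hS.nonneg]

lemma transpose_msqrt (hS : S.PosSemidef) : (msqrt S)ᵀ = msqrt S := by
  have h := (CFC.sqrt_nonneg S).isSelfAdjoint.star_eq
  rwa [star_eq_conjTranspose, conjTranspose_eq_transpose_of_trivial, ← msqrt_eq_sqrt hS] at h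

lemma isUnit_msqrt (hS : S.PosDef) : IsUnit (msqrt S) :=
  isUnit_of_mul_isUnit_left (by rw [msqrt_mul_self hS.posSemidef]; exact hS.isUnit)

end SquareRoot

section Model

variable {n d : ℕ}

lemma dMat_one (ω : Omega n d) : dMat 1 ω = of ω.1 := by
  rw [dMat, msqrt_one, Matrix.mul_one]

lemma resp_eq_resp_one (S : Matrix (Fin d) (Fin d) ℝ) (β : Fin d → ℝ) (ω : Omega n d) :
    resp S β ω = resp 1 (msqrt S *ᵥ β) ω := by
  rw [resp, resp, dMat_one, dMat, mulVec_mulVec]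

instance isProbabilityMeasure_PX : IsProbabilityMeasure (PX n d) := by
  unfold PX; infer_instance

lemma lintegral_P_comp_rotate {Q : Matrix (Fin d) (Fin d) ℝ} (hQ : Q ∈ orthogonalGroup (Fin d) ℝ)
    (σ2 : ℝ≥0) (f : Omega n d → ℝ≥0∞) :
    ∫⁻ ω, f (fun i => Q *ᵥ ω.1 i, ω.2) ∂P n d σ2 = ∫⁻ ω, f ω ∂P n d σ2 := by
  let eQ : (Fin d → ℝ) ≃ᵐ (Fin d → ℝ) :=
    (UnitaryGroup.toLinearEquiv ⟨Q, hQ⟩).toContinuousLinearEquiv.toHomeomorph.toMeasurableEquiv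
  let Φ : Omega n d ≃ᵐ Omega n d :=
    (MeasurableEquiv.piCongrRight fun _ => eQ).prodCongr (MeasurableEquiv.refl _)
  have hΦ : MeasurePreserving Φ (P n d σ2) (P n d σ2) :=
    (measurePreserving_pi _ _ fun _ => measurePreserving_mulVec_pi_gaussianReal hQ).prod
      (MeasurePreserving.id _)
  exact hΦ.lintegral_comp_emb Φ.measurableEmbedding f

lemma lintegral_P_comp_scale {σ2 : ℝ≥0} (hσ : σ2 ≠ 0) (f : Omega n d → ℝ≥0∞) :
    ∫⁻ ω, f (ω.1, Real.sqrt σ2 • ω.2) ∂P n d 1 = ∫⁻ ω, f ω ∂P n d σ2 := by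
  have hσ' : Real.sqrt σ2 ≠ 0 := by positivity
  let e : (Fin n → ℝ) ≃ᵐ (Fin n → ℝ) :=
    MeasurableEquiv.piCongrRight fun _ => (Homeomorph.mulLeft₀ _ hσ').toMeasurableEquiv
  have hmul : MeasurePreserving (Real.sqrt σ2 * ·) (gaussianReal 0 1) (gaussianReal 0 σ2) := by
    refine ⟨measurable_const_mul _, ?_⟩
    rw [gaussianReal_map_const_mul]
    congr 1
    · simp
    · ext; simp
  have he : MeasurePreserving e (Measure.pi fun _ => gaussianReal 0 1)
      (Measure.pi fun _ => gaussianReal 0 σ2) :=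
    measurePreserving_pi _ _ fun _ => hmul
  exact ((MeasurePreserving.id (PX n d)).prod he).lintegral_comp_emb
    ((MeasurableEquiv.refl _).prodCongr e).measurableEmbedding f

end Model

section Estimator

variable {n d : ℕ}

def IsLinearlyEquivariant
    (est : (Fin n → ℝ) → Matrix (Fin n) (Fin d) ℝ → Matrix (Fin d) (Fin d) ℝ → (Fin d → ℝ)) :
    Prop :=
  ∀ A : Matrix (Fin d) (Fin d) ℝ, IsUnit A → ∀ y X T, A⁻¹ *ᵥ est y X T = est y (X * A) (A * T * Aᵀ)

def IsScaleInvariant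
    (est : (Fin n → ℝ) → Matrix (Fin n) (Fin d) ℝ → Matrix (Fin d) (Fin d) ℝ → (Fin d → ℝ)) :
    Prop :=
  ∀ t : ℝ, t ≠ 0 → ∀ y X T, est y X T = est (t • y) (t • X) (t ^ 2 • T)

variable {est : (Fin n → ℝ) → Matrix (Fin n) (Fin d) ℝ → Matrix (Fin d) (Fin d) ℝ → (Fin d → ℝ)}

lemma IsLinearlyEquivariant.apply_mul_msqrt (h : IsLinearlyEquivariant est)
    {S : Matrix (Fin d) (Fin d) ℝ} (hS : S.PosDef) (y : Fin n → ℝ) (X : Matrix (Fin n) (Fin d) ℝ) :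
    est y (X * msqrt S) S = (msqrt S)⁻¹ *ᵥ est y X 1 := by
  rw [h _ (isUnit_msqrt hS), Matrix.mul_one, transpose_msqrt hS.posSemidef,
    msqrt_mul_self hS.posSemidef]

lemma IsLinearlyEquivariant.apply_mul_orthogonal (h : IsLinearlyEquivariant est)
    {Q : Matrix (Fin d) (Fin d) ℝ} (hQ : Q ∈ orthogonalGroup (Fin d) ℝ) (y : Fin n → ℝ)
    (X : Matrix (Fin n) (Fin d) ℝ) :
    est y (X * Q) 1 = Qᵀ *ᵥ est y X 1 := by
  have hQQ : Q * Qᵀ = 1 := (mem_orthogonalGroup_iff (Fin d) ℝ).mp hQ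
  have hequiv := h _ (IsUnit.of_mul_eq_one _ hQQ) y X 1
  rwa [Matrix.mul_one, hQQ, inv_eq_right_inv hQQ, eq_comm] at hequiv

lemma IsLinearlyEquivariant.apply_smul_response (h : IsLinearlyEquivariant est)
    (hs : IsScaleInvariant est) {t : ℝ} (ht : t ≠ 0) (y : Fin n → ℝ)
    (X : Matrix (Fin n) (Fin d) ℝ) (T : Matrix (Fin d) (Fin d) ℝ) :
    est (t • y) X T = t • est y X T := by
  have hA : (t⁻¹ • 1 : Matrix (Fin d) (Fin d) ℝ) * (t • 1) = 1 := by
    rw [smul_mul_smul_comm, inv_mul_cancel₀ ht, Matrix.mul_one, one_smul]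
  have hequiv := h _ (IsUnit.of_mul_eq_one _ hA) y X T
  rw [inv_eq_right_inv hA, smul_mulVec, one_mulVec] at hequiv
  rw [hequiv, hs t ht y]
  congr 1
  · rw [Matrix.mul_smul, Matrix.mul_one, smul_smul, mul_inv_cancel₀ ht, one_smul]
  · simp only [Matrix.smul_mul, Matrix.mul_smul, Matrix.one_mul, Matrix.mul_one, transpose_smul,
      transpose_one, smul_smul]
    rw [show t ^ 2 * (t⁻¹ * t⁻¹) = 1 by field_simp, one_smul]

end Estimator

section Risk

variable {n d : ℕ}
  {est : (Fin n → ℝ) → Matrix (Fin n) (Fin d) ℝ → Matrix (Fin d) (Fin d) ℝ → (Fin d → ℝ)}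

lemma risk_eq_risk_one_msqrt (h : IsLinearlyEquivariant est) {S : Matrix (Fin d) (Fin d) ℝ}
    (hS : S.PosDef) (β : Fin d → ℝ) (σ2 : ℝ≥0) :
    risk n S β σ2 (fun y X => est y X S) = risk n 1 (msqrt S *ᵥ β) σ2 (fun y X => est y X 1) := by
  have hM : IsUnit (msqrt S).det := (isUnit_iff_isUnit_det _).mp (isUnit_msqrt hS)
  refine congrArg _ (lintegral_congr fun ω => congrArg ENNReal.ofReal ?_)
  have hX : dMat S ω = dMat 1 ω * msqrt S := by rw [dMat_one]; rfl
  dsimp only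
  rw [resp_eq_resp_one, hX, h.apply_mul_msqrt hS, one_mulVec]
  set v := est (resp 1 (msqrt S *ᵥ β) ω) (dMat 1 ω) 1
  have hdiff : (msqrt S)⁻¹ *ᵥ v - β = (msqrt S)⁻¹ *ᵥ (v - msqrt S *ᵥ β) := by
    rw [mulVec_sub, mulVec_mulVec, nonsing_inv_mul _ hM, one_mulVec]
  have key := inv_mulVec_dotProduct_mul_self_mulVec hM (transpose_msqrt hS.posSemidef)
    (v - msqrt S *ᵥ β)
  rwa [msqrt_mul_self hS.posSemidef, ← hdiff] at key

lemma risk_one_eq_risk_one_unit_noise (h : IsLinearlyEquivariant est) (hs : IsScaleInvariant est)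
    (b : Fin d → ℝ) {σ2 : ℝ≥0} (hσ : σ2 ≠ 0) :
    risk n 1 b σ2 (fun y X => est y X 1) =
      risk n 1 ((Real.sqrt σ2)⁻¹ • b) 1 (fun y X => est y X 1) := by
  set σ := Real.sqrt σ2
  have hσ0 : σ ≠ 0 := by positivity
  have hσσ : σ * σ = σ2 := Real.mul_self_sqrt (NNReal.coe_nonneg σ2)
  set b' := σ⁻¹ • b
  have hb : σ • b' = b := by rw [smul_smul, mul_inv_cancel₀ hσ0, one_smul]
  have hpoint : ∀ ω : Omega n d,
      ENNReal.ofReal ((est (resp 1 b (ω.1, σ • ω.2)) (dMat 1 (ω.1, σ • ω.2)) 1 - b) ⬝ᵥ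
          (1 *ᵥ (est (resp 1 b (ω.1, σ • ω.2)) (dMat 1 (ω.1, σ • ω.2)) 1 - b))) =
        σ2 * ENNReal.ofReal ((est (resp 1 b' ω) (dMat 1 ω) 1 - b') ⬝ᵥ
          (1 *ᵥ (est (resp 1 b' ω) (dMat 1 ω) 1 - b'))) := by
    intro ω
    have hy : resp 1 b (ω.1, σ • ω.2) = σ • resp 1 b' ω := by
      rw [resp, resp, smul_add, ← mulVec_smul, hb]; rfl
    rw [hy, h.apply_smul_response hs hσ0, ← hb, ← smul_sub, one_mulVec, one_mulVec,
      smul_dotProduct, dotProduct_smul, smul_eq_mul, smul_eq_mul, ← mul_assoc, hσσ,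
      ENNReal.ofReal_mul (NNReal.coe_nonneg σ2), ENNReal.ofReal_coe_nnreal]
    rfl
  rw [risk, risk, ← lintegral_P_comp_scale hσ, lintegral_congr hpoint,
    lintegral_const_mul' _ _ ENNReal.coe_ne_top, ← mul_assoc,
    ENNReal.inv_mul_cancel (by exact_mod_cast hσ) ENNReal.coe_ne_top, ENNReal.coe_one, inv_one]

lemma risk_one_orthogonal_mulVec (h : IsLinearlyEquivariant est) {Q : Matrix (Fin d) (Fin d) ℝ}
    (hQ : Q ∈ orthogonalGroup (Fin d) ℝ) (w : Fin d → ℝ) (σ2 : ℝ≥0) :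
    risk n 1 (Q *ᵥ w) σ2 (fun y X => est y X 1) = risk n 1 w σ2 (fun y X => est y X 1) := by
  have hQT : Qᵀ ∈ orthogonalGroup (Fin d) ℝ := transpose_mem_unitaryGroup_iff.mpr hQ
  rw [risk, risk, ← lintegral_P_comp_rotate hQ]
  refine congrArg _ (lintegral_congr fun ω => congrArg ENNReal.ofReal ?_)
  have hX : dMat 1 (fun i => Q *ᵥ ω.1 i, ω.2) = dMat 1 ω * Qᵀ := by
    ext i j
    simp [dMat_one, mul_apply, mulVec, dotProduct, mul_comm]
  have hy : resp 1 (Q *ᵥ w) (fun i => Q *ᵥ ω.1 i, ω.2) = resp 1 w ω := by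
    rw [resp, resp, hX, mulVec_mulVec, Matrix.mul_assoc, (mem_orthogonalGroup_iff' _ ℝ).mp hQ,
      Matrix.mul_one]
  rw [hy, hX, h.apply_mul_orthogonal hQT, transpose_transpose, ← mulVec_sub, one_mulVec,
    one_mulVec, dotProduct_mulVec_mulVec_of_mem_orthogonalGroup hQ]

end Risk

section Reduction

variable {n d : ℕ}

def whitenedCoef (S : Matrix (Fin d) (Fin d) ℝ) (β : Fin d → ℝ) (σ2 : ℝ≥0) : Fin d → ℝ :=
  (Real.sqrt σ2)⁻¹ • (msqrt S *ᵥ β)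

lemma whitenedCoef_dotProduct_self {S : Matrix (Fin d) (Fin d) ℝ} (hS : S.PosSemidef)
    (β : Fin d → ℝ) (σ2 : ℝ≥0) :
    whitenedCoef S β σ2 ⬝ᵥ whitenedCoef S β σ2 = snr S β σ2 := by
  rw [whitenedCoef, smul_dotProduct, dotProduct_smul, smul_eq_mul, smul_eq_mul, ← mul_assoc,
    ← mul_inv, Real.mul_self_sqrt (NNReal.coe_nonneg σ2), dotProduct_mulVec, ← mulVec_transpose,
    transpose_msqrt hS, mulVec_mulVec, msqrt_mul_self hS, dotProduct_comm, snr, inv_mul_eq_div]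

lemma snr_nonneg {S : Matrix (Fin d) (Fin d) ℝ} (hS : S.PosSemidef) (β : Fin d → ℝ) (σ2 : ℝ≥0) :
    0 ≤ snr S β σ2 := by
  rw [← whitenedCoef_dotProduct_self hS]
  simpa using dotProduct_self_star_nonneg (whitenedCoef S β σ2)

lemma risk_eq_risk_one_of_dotProduct_self_eq_snr
    {est : (Fin n → ℝ) → Matrix (Fin n) (Fin d) ℝ → Matrix (Fin d) (Fin d) ℝ → (Fin d → ℝ)}
    (h : IsLinearlyEquivariant est) (hs : IsScaleInvariant est) {S : Matrix (Fin d) (Fin d) ℝ}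
    (hS : S.PosDef) (β : Fin d → ℝ) {σ2 : ℝ≥0} (hσ : σ2 ≠ 0) {v : Fin d → ℝ}
    (hv : v ⬝ᵥ v = snr S β σ2) :
    risk n S β σ2 (fun y X => est y X S) = risk n 1 v 1 (fun y X => est y X 1) := by
  obtain ⟨Q, hQ, rfl⟩ := exists_mem_orthogonalGroup_mulVec_eq
    (hv.trans (whitenedCoef_dotProduct_self hS.posSemidef β σ2).symm)
  rw [risk_eq_risk_one_msqrt h hS, risk_one_eq_risk_one_unit_noise h hs _ hσ,
    risk_one_orthogonal_mulVec h hQ, whitenedCoef]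

lemma sqnorm_eq_dotProduct_self (v : Fin d → ℝ) : sqnorm v = v ⬝ᵥ v := by
  simp [sqnorm, dotProduct, sq]

end Reduction

/-- If `β̂(y, X, Σ)` is LS (linearly equivariant and scale invariant), then
`R_V(β̂) = R_{V_u}(β̂)` where `V_u` corresponds to `Σ = I`, `σ² = 1`, `β = η u` for any fixed
unit vector `u`; in particular the risk depends on `(β, Σ, σ²)` only through `η²`. -/
theorem statement1 (n d : ℕ) (S : Matrix (Fin d) (Fin d) ℝ) (hS : S.PosDef)
    (β : Fin d → ℝ) (σ2 : ℝ≥0) (hσ : 0 < σ2)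
    (est : (Fin n → ℝ) → Matrix (Fin n) (Fin d) ℝ →
      Matrix (Fin d) (Fin d) ℝ → (Fin d → ℝ))
    (hequiv : ∀ (A : Matrix (Fin d) (Fin d) ℝ), IsUnit A →
      ∀ (y : Fin n → ℝ) (X : Matrix (Fin n) (Fin d) ℝ) (T : Matrix (Fin d) (Fin d) ℝ),
        A⁻¹ *ᵥ est y X T = est y (X * A) (A * T * Aᵀ))
    (hscale : ∀ (t : ℝ), t ≠ 0 →
      ∀ (y : Fin n → ℝ) (X : Matrix (Fin n) (Fin d) ℝ) (T : Matrix (Fin d) (Fin d) ℝ),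
        est y X T = est (t • y) (t • X) ((t ^ 2) • T)) :
    (∀ u : Fin d → ℝ, sqnorm u = 1 →
      risk n S β σ2 (fun y X => est y X S) =
        risk n 1 (Real.sqrt (snr S β σ2) • u) 1 (fun y X => est y X 1)) ∧
    (∀ (S' : Matrix (Fin d) (Fin d) ℝ), S'.PosDef →
      ∀ (β' : Fin d → ℝ) (σ2' : ℝ≥0), 0 < σ2' → snr S' β' σ2' = snr S β σ2 →
        risk n S' β' σ2' (fun y X => est y X S') = risk n S β σ2 (fun y X => est y X S)) := by
  have hw := whitenedCoef_dotProduct_self hS.posSemidef β σ2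
  refine ⟨fun u hu => ?_, fun S' hS' β' σ2' hσ' hsnr => ?_⟩
  · refine risk_eq_risk_one_of_dotProduct_self_eq_snr hequiv hscale hS β hσ.ne' ?_
    rw [smul_dotProduct, dotProduct_smul, ← sqnorm_eq_dotProduct_self, hu, smul_eq_mul,
      smul_eq_mul, mul_one, Real.mul_self_sqrt (snr_nonneg hS.posSemidef β σ2)]
  · rw [risk_eq_risk_one_of_dotProduct_self_eq_snr hequiv hscale hS' β' hσ'.ne'
      (hw.trans hsnr.symm), risk_eq_risk_one_of_dotProduct_self_eq_snr hequiv hscale hS β hσ.ne' hw]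

end Dicker

end
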